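/- There exists a continuous nondecreasing function $\Psi : [0,1] \to [0,1]$ with $\Psi(0) = 0$, $\Psi(1) = 1$, such that $\Psi'(t) = 0$ for all $t \in (0,1)$ outside a set of logarithmic capacity zero. -/

import Mathlib

open Filter

/-- `V_n(E)` for `E ⊆ ℝ`: supremum of products of pairwise distances over
`n`-point collections in `E`. -/
noncomputable def VnR (E : Set ℝ) (n : ℕ) : ℝ :=
  sSup {v : ℝ | ∃ z : Fin n → ℝ, (∀ i, z i ∈ E) ∧
    v = ∏ p ∈ Finset.univ.filter (fun p : Fin n × Fin n => p.1 < p.2), |z p.1 - z p.2|}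

/-- The logarithmic capacity (transfinite diameter) of `E ⊆ ℝ`: the limit
(= infimum, the sequence being nonincreasing) of `V_n^{2/(n(n-1))}`. -/
noncomputable def capR (E : Set ℝ) : ℝ :=
  ⨅ n : ℕ, VnR E (n + 2) ^ ((2 : ℝ) / (((n : ℝ) + 2) * ((n : ℝ) + 1)))

/-!
The exceptional set is the thin Cantor set `K` of sums `∑ aₖ (ℓₖ - ℓₖ₊₁)`, `a ∈ {0,1}^ℕ`, with
`ℓₖ = 2^(-8^k)`. Each gap `ℓₖ - ℓₖ₊₁` exceeds the sum `ℓₖ₊₁` of all later ones, so this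
embedding of `{0,1}^ℕ` is strictly increasing for the lexicographic order, along which the binary
value `0.a₀a₁…` is nondecreasing. Hence `Ψ t = sup {0.a₀a₁… | ∑ aₖ (ℓₖ - ℓₖ₊₁) ≤ t}` is
nondecreasing, maps `[0,1]` onto `[0,1]` (so it is continuous there), and is locally constant
off the compact set `K`.

Among any `2^k + 1` points of `K`, two share their first `k` digits and so are within `ℓₖ` of
each other, while all other distances in `(0,1)` are at most `1`. Thus `V_{2^k+1}(K) ≤ ℓₖ`, and
after raising to the power `2 / (2^k (2^k + 1))` this is still at most `2^(-2^k) ≤ 2^(-k)`.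
-/

open Set Topology

theorem MonotoneOn.continuousOn_of_surjOn {α β : Type*} [LinearOrder α] [TopologicalSpace α]
    [OrderTopology α] [LinearOrder β] [TopologicalSpace β] [OrderTopology β] [DenselyOrdered β]
    {f : α → β} {a b : α} {c d : β} (hf : MonotoneOn f (Icc a b))
    (hmaps : MapsTo f (Icc a b) (Icc c d)) (hsurj : SurjOn f (Icc a b) (Icc c d)) :
    ContinuousOn f (Icc a b) := by
  have hmono : Monotone (hmaps.restrict f (Icc a b) (Icc c d)) :=
    fun x y hxy => hf x.2 y.2 hxy
  have := hmono.continuous_of_surjective (hmaps.restrict_surjective_iff.mpr hsurj)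
  rw [continuousOn_iff_continuous_domRestrict]
  exact continuous_subtype_val.comp this

theorem hasSum_sub_succ {f : ℕ → ℝ} (hf : Antitone f) (hlim : Tendsto f atTop (𝓝 0)) :
    HasSum (fun n => f n - f (n + 1)) (f 0) := by
  rw [hasSum_iff_tendsto_nat_of_nonneg fun n => sub_nonneg.mpr (hf n.le_succ)]
  simp only [Finset.sum_range_sub']
  simpa using hlim.const_sub (f 0)

theorem Real.ofDigits_le_of_lex {b : ℕ} {x y : ℕ → Fin b} {k : ℕ} (hagree : ∀ j < k, x j = y j)
    (hlt : x k < y k) : Real.ofDigits x ≤ Real.ofDigits y := by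
  have hprefix : ∑ j ∈ Finset.range k, Real.ofDigitsTerm x j =
      ∑ j ∈ Finset.range k, Real.ofDigitsTerm y j :=
    Finset.sum_congr rfl fun j hj => by
      simp only [Real.ofDigitsTerm, hagree j (Finset.mem_range.mp hj)]
  have hdigit : ((x k : ℕ) : ℝ) + 1 ≤ (y k : ℕ) := by exact_mod_cast hlt
  have hpos : (0 : ℝ) < ((b : ℝ) ^ (k + 1))⁻¹ := by
    have : 0 < b := Fin.pos (x 0)
    positivity
  rw [Real.ofDigits_eq_sum_add_ofDigits x (k + 1), Real.ofDigits_eq_sum_add_ofDigits y (k + 1),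
    Finset.sum_range_succ, Finset.sum_range_succ, hprefix]
  simp only [Real.ofDigitsTerm]
  nlinarith [Real.ofDigits_le_one fun i => x (i + (k + 1)),
    Real.ofDigits_nonneg fun i => y (i + (k + 1))]

theorem Real.monotone_ofDigits_ofLex {b : ℕ} :
    Monotone fun a : Lex (ℕ → Fin b) => Real.ofDigits (ofLex a) :=
  monotone_iff_forall_lt.mpr fun _ _ ⟨_, hagree, hlt⟩ => Real.ofDigits_le_of_lex hagree hlt

noncomputable def digitSum (w : ℕ → ℝ) (a : ℕ → Fin 2) : ℝ := ∑' k, (a k : ℝ) * w k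

section digitSum

variable {w : ℕ → ℝ}

theorem cast_fin_two_mem_Icc (d : Fin 2) : (d : ℝ) ∈ Icc 0 1 := by
  fin_cases d <;> simp

theorem digitSum_term_nonneg (hw : ∀ k, 0 ≤ w k) (a : ℕ → Fin 2) (k : ℕ) : 0 ≤ (a k : ℝ) * w k :=
  mul_nonneg (cast_fin_two_mem_Icc _).1 (hw k)

theorem digitSum_term_le (hw : ∀ k, 0 ≤ w k) (a : ℕ → Fin 2) (k : ℕ) : (a k : ℝ) * w k ≤ w k :=
  mul_le_of_le_one_left (hw k) (cast_fin_two_mem_Icc _).2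

theorem summable_digitSum_term (hw : ∀ k, 0 ≤ w k) (hs : Summable w) (a : ℕ → Fin 2) :
    Summable fun k => (a k : ℝ) * w k :=
  hs.of_nonneg_of_le (digitSum_term_nonneg hw a) (digitSum_term_le hw a)

theorem digitSum_nonneg (hw : ∀ k, 0 ≤ w k) (a : ℕ → Fin 2) : 0 ≤ digitSum w a :=
  tsum_nonneg (digitSum_term_nonneg hw a)

theorem digitSum_le_tsum (hw : ∀ k, 0 ≤ w k) (hs : Summable w) (a : ℕ → Fin 2) :
    digitSum w a ≤ ∑' k, w k :=
  (summable_digitSum_term hw hs a).tsum_le_tsum (digitSum_term_le hw a) hs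

@[simp] lemma digitSum_zero : digitSum w 0 = 0 := by simp [digitSum]

theorem digitSum_eq_sum_add_digitSum (hw : ∀ k, 0 ≤ w k) (hs : Summable w) (a : ℕ → Fin 2)
    (n : ℕ) : digitSum w a = ∑ k ∈ Finset.range n, (a k : ℝ) * w k +
      digitSum (fun k => w (k + n)) (fun k => a (k + n)) :=
  ((summable_digitSum_term hw hs a).sum_add_tsum_nat_add n).symm

theorem abs_digitSum_sub_le (hw : ∀ k, 0 ≤ w k) (hs : Summable w) {a b : ℕ → Fin 2} {n : ℕ}
    (hab : ∀ k < n, a k = b k) : |digitSum w a - digitSum w b| ≤ ∑' k, w (k + n) := by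
  have hw' : ∀ k, 0 ≤ w (k + n) := fun k => hw _
  have hs' : Summable fun k => w (k + n) := (summable_nat_add_iff n).mpr hs
  rw [digitSum_eq_sum_add_digitSum hw hs a n, digitSum_eq_sum_add_digitSum hw hs b n,
    Finset.sum_congr rfl fun k hk => by rw [hab k (Finset.mem_range.mp hk)],
    add_sub_add_left_eq_sub]
  exact abs_sub_le_of_nonneg_of_le (digitSum_nonneg hw' _) (digitSum_le_tsum hw' hs' _)
    (digitSum_nonneg hw' _) (digitSum_le_tsum hw' hs' _)

theorem digitSum_lt_of_lex (hw : ∀ k, 0 ≤ w k) (hs : Summable w)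
    (hdom : ∀ k, ∑' j, w (j + (k + 1)) < w k) {a b : ℕ → Fin 2} {k : ℕ}
    (hagree : ∀ j < k, a j = b j) (hlt : a k < b k) : digitSum w a < digitSum w b := by
  have hab : ((a k : ℕ) : ℝ) = 0 ∧ ((b k : ℕ) : ℝ) = 1 := by
    have : (a k : ℕ) < b k := hlt
    have := (b k).isLt
    constructor <;> norm_cast <;> omega
  have hw' : ∀ j, 0 ≤ w (j + (k + 1)) := fun j => hw _
  have hs' : Summable fun j => w (j + (k + 1)) := (summable_nat_add_iff (k + 1)).mpr hs
  have hprefix : ∑ j ∈ Finset.range k, (a j : ℝ) * w j = ∑ j ∈ Finset.range k, (b j : ℝ) * w j :=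
    Finset.sum_congr rfl fun j hj => by rw [hagree j (Finset.mem_range.mp hj)]
  rw [digitSum_eq_sum_add_digitSum hw hs a (k + 1), digitSum_eq_sum_add_digitSum hw hs b (k + 1),
    Finset.sum_range_succ, Finset.sum_range_succ, hprefix, hab.1, hab.2]
  linarith [digitSum_le_tsum hw' hs' fun j => a (j + (k + 1)),
    digitSum_nonneg hw' fun j => b (j + (k + 1)), hdom k]

theorem strictMono_digitSum (hw : ∀ k, 0 ≤ w k) (hs : Summable w)
    (hdom : ∀ k, ∑' j, w (j + (k + 1)) < w k) :
    StrictMono fun a : Lex (ℕ → Fin 2) => digitSum w (ofLex a) :=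
  fun _ _ ⟨_, hagree, hlt⟩ => digitSum_lt_of_lex hw hs hdom hagree hlt

theorem continuous_digitSum (hw : ∀ k, 0 ≤ w k) (hs : Summable w) : Continuous (digitSum w) := by
  refine continuous_tsum (fun k => ?_) hs fun k a => ?_
  · fun_prop
  · rw [Real.norm_eq_abs, abs_of_nonneg (digitSum_term_nonneg hw a k)]
    exact digitSum_term_le hw a k

end digitSum

noncomputable def staircase {X : Type*} (φ y : X → ℝ) (t : ℝ) : ℝ := sSup (y '' {a | φ a ≤ t})

section staircase

variable {X : Type*} {φ y : X → ℝ}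

theorem staircase_nonneg (hy : ∀ a, 0 ≤ y a) (t : ℝ) : 0 ≤ staircase φ y t :=
  Real.sSup_nonneg <| forall_mem_image.mpr fun a _ => hy a

theorem staircase_le {c : ℝ} (hc : 0 ≤ c) (hy : ∀ a, y a ≤ c) (t : ℝ) : staircase φ y t ≤ c :=
  Real.sSup_le (forall_mem_image.mpr fun a _ => hy a) hc

theorem le_staircase (hy : BddAbove (range y)) {a : X} {t : ℝ} (ha : φ a ≤ t) :
    y a ≤ staircase φ y t :=
  le_csSup (hy.mono (image_subset_range _ _)) (mem_image_of_mem y ha)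

theorem monotone_staircase (hy₀ : ∀ a, 0 ≤ y a) (hy : BddAbove (range y)) :
    Monotone (staircase φ y) := by
  intro s t hst
  rcases eq_empty_or_nonempty {a | φ a ≤ s} with hs | hs
  · rw [staircase, hs, image_empty, Real.sSup_empty]
    exact staircase_nonneg hy₀ t
  · exact csSup_le_csSup (hy.mono (image_subset_range _ _)) (hs.image y)
      (image_mono fun a ha => le_trans ha hst)

theorem staircase_apply (hφy : ∀ a b, φ a ≤ φ b → y a ≤ y b) (hy : BddAbove (range y)) (a : X) :
    staircase φ y (φ a) = y a :=
  le_antisymm (csSup_le ⟨y a, mem_image_of_mem y (le_refl (φ a))⟩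
    (forall_mem_image.mpr fun _ hb => hφy _ _ hb)) (le_staircase hy le_rfl)

theorem staircase_eventuallyEq {t : ℝ} (ht : t ∉ closure (range φ)) :
    staircase φ y =ᶠ[𝓝 t] fun _ => staircase φ y t := by
  obtain ⟨ε, hε, hball⟩ := Metric.mem_nhds_iff.mp (isClosed_closure.isOpen_compl.mem_nhds ht)
  filter_upwards [Metric.ball_mem_nhds t hε] with u hu
  suffices {a | φ a ≤ u} = {a | φ a ≤ t} by rw [staircase, staircase, this]
  ext a
  have hfar : ε ≤ |φ a - t| := by
    by_contra! h
    exact hball (Metric.mem_ball.mpr (by rwa [Real.dist_eq]))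
      (subset_closure (mem_range_self a))
  rw [Metric.mem_ball, Real.dist_eq] at hu
  show φ a ≤ u ↔ φ a ≤ t
  constructor <;> intro h <;> cases abs_cases (φ a - t) <;> cases abs_cases (u - t) <;> linarith

theorem hasDerivAt_staircase {t : ℝ} (ht : t ∉ closure (range φ)) :
    HasDerivAt (staircase φ y) 0 t :=
  (hasDerivAt_const t _).congr_of_eventuallyEq (staircase_eventuallyEq ht)

end staircase

theorem VnR_nonneg (E : Set ℝ) (n : ℕ) : 0 ≤ VnR E n :=
  Real.sSup_nonneg fun _ ⟨_, _, hv⟩ => hv ▸ Finset.prod_nonneg fun _ _ => abs_nonneg _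

theorem prod_abs_sub_le_abs_sub {n : ℕ} {z : Fin n → ℝ} (hz : ∀ i j, |z i - z j| ≤ 1) {i j : Fin n}
    (hij : i < j) :
    ∏ p ∈ Finset.univ.filter (fun p : Fin n × Fin n => p.1 < p.2), |z p.1 - z p.2| ≤
      |z i - z j| := by
  have hmem : (i, j) ∈ Finset.univ.filter (fun p : Fin n × Fin n => p.1 < p.2) :=
    Finset.mem_filter.mpr ⟨Finset.mem_univ _, hij⟩
  rw [← Finset.mul_prod_erase _ _ hmem]
  exact mul_le_of_le_one_right (abs_nonneg _)
    (Finset.prod_le_one (fun _ _ => abs_nonneg _) fun p _ => hz p.1 p.2)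

/-- Pigeonhole bound: among `n` points of `E`, two lie in the same piece of the cover. -/
theorem VnR_le_of_cover {E : Set ℝ} {n : ℕ} {ι : Type*} [Fintype ι] (S : ι → Set ℝ)
    (hcover : E ⊆ ⋃ i, S i) (hcard : Fintype.card ι < n) {δ : ℝ} (hδ : 0 ≤ δ)
    (hE : ∀ x ∈ E, ∀ y ∈ E, |x - y| ≤ 1) (hS : ∀ i, ∀ x ∈ S i, ∀ y ∈ S i, |x - y| ≤ δ) :
    VnR E n ≤ δ := by
  refine Real.sSup_le ?_ hδ
  rintro _ ⟨z, hz, rfl⟩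
  choose piece hpiece using fun i => mem_iUnion.mp (hcover (hz i))
  obtain ⟨i, j, hne, hij⟩ := Fintype.exists_ne_map_eq_of_card_lt piece (by simpa using hcard)
  have hz1 : ∀ i j, |z i - z j| ≤ 1 := fun i j => hE _ (hz i) _ (hz j)
  rcases hne.lt_or_gt with hlt | hlt
  · exact (prod_abs_sub_le_abs_sub hz1 hlt).trans (hS _ _ (hpiece i) _ (hij ▸ hpiece j))
  · exact (prod_abs_sub_le_abs_sub hz1 hlt).trans (hS _ _ (hpiece j) _ (hij ▸ hpiece i))

theorem capR_le_of_VnR_le {E : Set ℝ} {n : ℕ} {δ : ℝ} (h : VnR E (n + 2) ≤ δ) :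
    capR E ≤ δ ^ ((2 : ℝ) / (((n : ℝ) + 2) * ((n : ℝ) + 1))) :=
  (ciInf_le ⟨0, forall_mem_range.mpr fun _ => Real.rpow_nonneg (VnR_nonneg _ _) _⟩ n).trans
    (Real.rpow_le_rpow (VnR_nonneg _ _) h (by positivity))

theorem capR_nonneg (E : Set ℝ) : 0 ≤ capR E :=
  Real.iInf_nonneg fun _ => Real.rpow_nonneg (VnR_nonneg _ _) _

namespace ThinCantor

noncomputable def len (k : ℕ) : ℝ := 2⁻¹ ^ 8 ^ k

noncomputable def gap (k : ℕ) : ℝ := len k - len (k + 1)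

theorem len_pos (k : ℕ) : 0 < len k := by unfold len; positivity

theorem len_succ (k : ℕ) : len (k + 1) = len k ^ 8 := by
  rw [len, len, pow_succ, pow_mul]

theorem len_le_half (k : ℕ) : len k ≤ 2⁻¹ :=
  pow_le_of_le_one (by norm_num) (by norm_num) (pow_ne_zero _ (by norm_num))

theorem antitone_len : Antitone len :=
  antitone_nat_of_succ_le fun k => by
    rw [len_succ]
    exact pow_le_of_le_one (len_pos k).le ((len_le_half k).trans (by norm_num)) (by norm_num)

theorem tendsto_len : Tendsto len atTop (𝓝 0) :=
  (tendsto_pow_atTop_nhds_zero_of_lt_one (by norm_num) (by norm_num)).comp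
    (tendsto_pow_atTop_atTop_of_one_lt (by norm_num : 1 < 8))

theorem gap_nonneg (k : ℕ) : 0 ≤ gap k := sub_nonneg.mpr (antitone_len k.le_succ)

theorem hasSum_gap_tail (k : ℕ) : HasSum (fun j => gap (j + k)) (len k) := by
  have h := hasSum_sub_succ (antitone_len.comp_monotone fun _ _ h => Nat.add_le_add_right h k)
    (tendsto_len.comp (tendsto_add_atTop_nat k))
  simpa [gap, add_right_comm _ 1 k] using h

theorem tsum_gap_tail_lt (k : ℕ) : ∑' j, gap (j + (k + 1)) < gap k := by
  rw [(hasSum_gap_tail (k + 1)).tsum_eq, gap, len_succ]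
  have h0 := len_pos k
  have h1 := len_le_half k
  have h7 : len k ^ 7 < 2⁻¹ := (pow_lt_self_of_lt_one₀ h0 (by linarith) (by norm_num)).trans_le h1
  nlinarith

theorem len_rpow_le (k : ℕ) : len k ^ ((2 : ℝ) / ((2 ^ k + 1) * 2 ^ k)) ≤ 2⁻¹ ^ k := by
  have hX : (1 : ℝ) ≤ 2 ^ k := one_le_pow₀ (by norm_num)
  have hk : (k : ℝ) ≤ 2 ^ k := by exact_mod_cast Nat.lt_two_pow_self.le
  have hexp : (k : ℝ) ≤ 8 ^ k * (2 / ((2 ^ k + 1) * 2 ^ k)) := by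
    rw [show (8 : ℝ) ^ k = (2 ^ k) ^ 3 by rw [← pow_mul, mul_comm, pow_mul]; norm_num,
      mul_div_assoc', le_div_iff₀ (by positivity)]
    nlinarith [mul_le_mul hk (by linarith : (2 : ℝ) ^ k + 1 ≤ 2 * 2 ^ k) (by positivity)
      (by positivity)]
  calc len k ^ ((2 : ℝ) / ((2 ^ k + 1) * 2 ^ k))
      = 2⁻¹ ^ (8 ^ k * (2 / ((2 ^ k + 1) * 2 ^ k)) : ℝ) := by
        rw [len, ← Real.rpow_natCast, ← Real.rpow_mul (by norm_num)]
        push_cast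
        rfl
    _ ≤ 2⁻¹ ^ (k : ℝ) := Real.rpow_le_rpow_of_exponent_ge (by norm_num) (by norm_num) hexp
    _ = 2⁻¹ ^ k := Real.rpow_natCast _ k

theorem hasSum_gap : HasSum gap (len 0) := by simpa using hasSum_gap_tail 0

theorem summable_gap : Summable gap := hasSum_gap.summable

noncomputable def embed : (ℕ → Fin 2) → ℝ := digitSum gap

noncomputable def singularFunction : ℝ → ℝ := staircase embed Real.ofDigits

theorem continuous_embed : Continuous embed := continuous_digitSum gap_nonneg summable_gap

theorem isClosed_range_embed : IsClosed (range embed) :=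
  (isCompact_range continuous_embed).isClosed

theorem embed_mem_Icc (a : ℕ → Fin 2) : embed a ∈ Icc 0 1 :=
  ⟨digitSum_nonneg gap_nonneg a, (digitSum_le_tsum gap_nonneg summable_gap a).trans <| by
    rw [hasSum_gap.tsum_eq]; linarith [len_le_half 0]⟩

theorem abs_embed_sub_le {a b : ℕ → Fin 2} {k : ℕ} (hab : ∀ j < k, a j = b j) :
    |embed a - embed b| ≤ len k := by
  have h := abs_digitSum_sub_le gap_nonneg summable_gap hab
  rwa [(hasSum_gap_tail k).tsum_eq] at h

theorem strictMono_embed : StrictMono fun a : Lex (ℕ → Fin 2) => embed (ofLex a) :=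
  strictMono_digitSum gap_nonneg summable_gap tsum_gap_tail_lt

theorem ofDigits_le_of_embed_le {a b : ℕ → Fin 2} (h : embed a ≤ embed b) :
    Real.ofDigits a ≤ Real.ofDigits b :=
  Real.monotone_ofDigits_ofLex (strictMono_embed.le_iff_le.mp h : toLex a ≤ toLex b)

theorem bddAbove_range_ofDigits : BddAbove (range (Real.ofDigits (b := 2))) :=
  ⟨1, forall_mem_range.mpr Real.ofDigits_le_one⟩

theorem singularFunction_embed (a : ℕ → Fin 2) : singularFunction (embed a) = Real.ofDigits a :=
  staircase_apply (fun _ _ => ofDigits_le_of_embed_le) bddAbove_range_ofDigits a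

theorem monotone_singularFunction : Monotone singularFunction :=
  monotone_staircase Real.ofDigits_nonneg bddAbove_range_ofDigits

theorem mapsTo_singularFunction : MapsTo singularFunction (Icc 0 1) (Icc 0 1) :=
  fun t _ => ⟨staircase_nonneg Real.ofDigits_nonneg t,
    staircase_le zero_le_one Real.ofDigits_le_one t⟩

theorem surjOn_singularFunction : SurjOn singularFunction (Icc 0 1) (Icc 0 1) := by
  intro v hv
  obtain ⟨a, -, rfl⟩ := Real.ofDigits_SurjOn one_lt_two hv
  exact ⟨embed a, embed_mem_Icc a, singularFunction_embed a⟩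

theorem continuousOn_singularFunction : ContinuousOn singularFunction (Icc 0 1) :=
  (monotone_singularFunction.monotoneOn _).continuousOn_of_surjOn mapsTo_singularFunction
    surjOn_singularFunction

theorem singularFunction_zero : singularFunction 0 = 0 := by
  have h := singularFunction_embed 0
  rwa [embed, digitSum_zero, show Real.ofDigits (0 : ℕ → Fin 2) = 0 by
    simp [Real.ofDigits, Real.ofDigitsTerm]] at h

theorem singularFunction_one : singularFunction 1 = 1 := by
  obtain ⟨t, ht, hone⟩ := surjOn_singularFunction (right_mem_Icc.mpr zero_le_one)
  have hle := monotone_singularFunction ht.2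
  rw [hone] at hle
  exact le_antisymm (mapsTo_singularFunction (right_mem_Icc.mpr zero_le_one)).2 hle

theorem hasDerivAt_singularFunction {t : ℝ} (ht : t ∉ range embed) :
    HasDerivAt singularFunction 0 t :=
  hasDerivAt_staircase (by rwa [isClosed_range_embed.closure_eq])

theorem VnR_le_len (k : ℕ) : VnR (range embed ∩ Ioo 0 1) (2 ^ k + 1) ≤ len k := by
  refine VnR_le_of_cover (fun d : Fin k → Fin 2 => embed '' {a | ∀ j : Fin k, a j = d j}) ?_
    (by simp) (len_pos k).le ?_ ?_
  · rintro _ ⟨⟨a, rfl⟩, -⟩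
    exact mem_iUnion.mpr ⟨fun j => a j, a, fun _ => rfl, rfl⟩
  · rintro x ⟨-, hx⟩ y ⟨-, hy⟩
    rw [abs_le]
    constructor <;> linarith [hx.1, hx.2, hy.1, hy.2]
  · rintro d _ ⟨a, ha, rfl⟩ _ ⟨b, hb, rfl⟩
    exact abs_embed_sub_le fun j hj => (ha ⟨j, hj⟩).trans (hb ⟨j, hj⟩).symm

theorem capR_range_embed_inter : capR (range embed ∩ Ioo 0 1) = 0 := by
  refine le_antisymm (ge_of_tendsto' (tendsto_pow_atTop_nhds_zero_of_lt_one
    (by norm_num : (0 : ℝ) ≤ 2⁻¹) (by norm_num)) fun k => ?_) (capR_nonneg _)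
  have hk : 2 ^ k - 1 + 2 = 2 ^ k + 1 := by have := Nat.one_le_two_pow (n := k); omega
  calc capR (range embed ∩ Ioo 0 1)
      ≤ len k ^ ((2 : ℝ) / ((((2 ^ k - 1 : ℕ) : ℝ) + 2) * (((2 ^ k - 1 : ℕ) : ℝ) + 1))) :=
        capR_le_of_VnR_le (hk ▸ VnR_le_len k)
    _ = len k ^ ((2 : ℝ) / ((2 ^ k + 1) * 2 ^ k)) := by
        rw [Nat.cast_sub Nat.one_le_two_pow]
        push_cast
        ring_nf
    _ ≤ 2⁻¹ ^ k := len_rpow_le k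

end ThinCantor

/-- There is a continuous nondecreasing function `Ψ : [0,1] → [0,1]` with
`Ψ(0) = 0`, `Ψ(1) = 1`, whose derivative vanishes at every point of `(0,1)`
outside a set of logarithmic capacity zero. -/
theorem exists_cantor_singular_cap :
    ∃ Ψ : ℝ → ℝ, ContinuousOn Ψ (Set.Icc 0 1) ∧ MonotoneOn Ψ (Set.Icc 0 1) ∧
      Set.MapsTo Ψ (Set.Icc 0 1) (Set.Icc 0 1) ∧ Ψ 0 = 0 ∧ Ψ 1 = 1 ∧
      ∃ N : Set ℝ, N ⊆ Set.Ioo 0 1 ∧ capR N = 0 ∧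
        ∀ t ∈ Set.Ioo (0 : ℝ) 1, t ∉ N → HasDerivAt Ψ 0 t := by
  open ThinCantor in
  exact ⟨singularFunction, continuousOn_singularFunction, monotone_singularFunction.monotoneOn _,
    mapsTo_singularFunction, singularFunction_zero, singularFunction_one,
    range embed ∩ Ioo 0 1, inter_subset_right, capR_range_embed_inter,
    fun t ht htN => hasDerivAt_singularFunction fun hmem => htN ⟨hmem, ht⟩⟩
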